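/- Every fully indecomposable nonnegative square matrix has total support. -/
import Mathlib


open Matrix Finset

/-- Full indecomposability: no nonempty row subset `R` and column subset `C`
with `|R| + |C| = n` and a zero block `M[R, C]`; equivalently, no permutation
matrices bring `M` to block upper triangular form with square diagonal blocks
of positive sizes. -/
def FullyIndecomposable {n : ℕ} (M : Matrix (Fin n) (Fin n) ℝ) : Prop :=
  ¬ ∃ (R C : Finset (Fin n)), R.Nonempty ∧ C.Nonempty ∧
      R.card + C.card = n ∧ ∀ i ∈ R, ∀ j ∈ C, M i j = 0

/-- Total support: every positive entry lies on a positive diagonal. -/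
def TotalSupport {n : ℕ} (M : Matrix (Fin n) (Fin n) ℝ) : Prop :=
  ∀ i j, 0 < M i j → ∃ σ : Equiv.Perm (Fin n), σ i = j ∧ ∀ k, 0 < M k (σ k)

/-- Every fully indecomposable nonnegative square matrix has total support. -/
theorem totalSupport_of_fullyIndecomposable
    {n : ℕ} (M : Matrix (Fin n) (Fin n) ℝ)
    (hM : ∀ i j, 0 ≤ M i j)
    (hfull : FullyIndecomposable M) :
    TotalSupport M := by
  classical
  intro i j hij
  -- bipartite graph on rows ≠ i, columns ≠ j
  set t : {k : Fin n // k ≠ i} → Finset (Fin n) :=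
    fun k => (Finset.univ.erase j).filter (fun c => 0 < M k.1 c) with ht
  have hall : ∀ s : Finset {k : Fin n // k ≠ i}, s.card ≤ (s.biUnion t).card := by
    intro s
    by_contra hcon
    push_neg at hcon
    set S : Finset (Fin n) := s.image (fun k => k.1) with hS
    set T : Finset (Fin n) := s.biUnion t with hT
    have hScard : S.card = s.card := Finset.card_image_of_injective _ Subtype.val_injective
    have hTj : j ∉ T := by
      simp only [hT, Finset.mem_biUnion, ht, Finset.mem_filter, Finset.mem_erase]
      rintro ⟨k, -, ⟨hj, -⟩, -⟩
      exact hj rfl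
    have hTsub : T ⊆ Finset.univ.erase j := by
      intro c hc
      simp only [hT, Finset.mem_biUnion, ht, Finset.mem_filter] at hc
      obtain ⟨k, -, hc, -⟩ := hc
      exact hc
    have hSne : S.Nonempty := by
      rw [← Finset.card_pos, hScard]
      omega
    have hsle : s.card ≤ n - 1 := by
      have := Finset.card_le_univ s
      have hcard : Fintype.card {k : Fin n // k ≠ i} = n - 1 := by
        simp [Fintype.card_subtype_compl]
      omega
    have hn1 : 1 ≤ n := by
      rcases hSne with ⟨x, -⟩
      exact Nat.one_le_iff_ne_zero.mpr (by rintro rfl; exact x.elim0)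
    -- candidate column set
    have hcardC : n - S.card ≤ ((Finset.univ.erase j) \ T).card := by
      rw [Finset.card_sdiff_of_subset hTsub]
      have : (Finset.univ.erase j).card = n - 1 := by simp
      omega
    obtain ⟨C, hCsub, hCcard⟩ := Finset.exists_subset_card_eq hcardC
    apply hfull
    refine ⟨S, C, hSne, ?_, by omega, ?_⟩
    · rw [← Finset.card_pos, hCcard]; omega
    · intro a ha b hb
      simp only [hS, Finset.mem_image] at ha
      obtain ⟨k, hk, rfl⟩ := ha
      have hb' := hCsub hb
      rw [Finset.mem_sdiff, Finset.mem_erase] at hb'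
      by_contra hne
      have hpos : 0 < M k.1 b := lt_of_le_of_ne (hM _ _) (Ne.symm hne)
      exact hb'.2 (Finset.mem_biUnion.mpr ⟨k, hk,
        by simp [ht, Finset.mem_erase, hb'.1.1, hpos]⟩)
  obtain ⟨f, hfinj, hf⟩ := (Finset.all_card_le_biUnion_card_iff_exists_injective t).mp hall
  have hfj : ∀ k, f k ≠ j := fun k => by
    have := hf k
    simp only [ht, Finset.mem_filter, Finset.mem_erase] at this
    exact this.1.1
  have hfpos : ∀ k, 0 < M k.1 (f k) := fun k => by
    have := hf k
    simp only [ht, Finset.mem_filter] at this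
    exact this.2
  set g : Fin n → Fin n := fun k => if h : k = i then j else f ⟨k, h⟩ with hg
  have hginj : Function.Injective g := by
    intro a b hab
    simp only [hg] at hab
    split_ifs at hab with ha hb hb
    · rw [ha, hb]
    · exact absurd hab.symm (hfj _)
    · exact absurd hab (hfj _)
    · exact congrArg Subtype.val (hfinj hab)
  let σ := Equiv.ofBijective g (Finite.injective_iff_bijective.mp hginj)
  refine ⟨σ, ?_, ?_⟩
  · show g i = j
    simp [hg]
  · intro k
    show 0 < M k (g k)
    by_cases h : k = i
    · subst h; simpa [hg] using hij
    · simpa [hg, h] using hfpos ⟨k, h⟩
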